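/- arXiv:2504.15096 — 4 statements merged into one kernel-verified Lean document; each statement's English description precedes it below -/
import Mathlib

section
/- Let H be a finite simple graph and let {A_i}_{i∈I} be a family of pairwise disjoint subsets of V(H) indexed by a finite set I (their union need not be all of V(H)). For each i ∈ I let η_i > 0 be a real number and a_i ≥ 1 an integer, and define A_i⁺ = {v ∈ A_i : d_H(v) ≥ 2(1 + η_i)·a_i}. Set η = min_{i∈I} η_i. If (1 + 1/η)·∑_{i∈I} a_i·|A_i \ A_i⁺| < |V(H)|, then there exists a non-empty induced subgraph H' of H such that: (a) d_{H'}(v) ≥ a_i for every i ∈ I and every v ∈ V(H') ∩ A_i; and (b) V(H) \ V(H') ⊆ ∪_{i∈I} A_i and |V(H) \ V(H')| ≤ ∑_{i∈I} a_i·|A_i \ V(H')| ≤ (1 + 1/η)·∑_{i∈I} a_i·|A_i \ A_i⁺|. -/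
open Finset in
lemma key_aux {V : Type} [Fintype V] [DecidableEq V]
    (H : SimpleGraph V) [DecidableRel H.Adj]
    {ι : Type} [Fintype ι]
    (A : ι → Finset V) (hdisj : ∀ i j, i ≠ j → Disjoint (A i) (A j))
    (a : ι → ℕ) :
    ∀ S : Finset V, ∃ T : Finset V, T ⊆ S ∧
      (∀ i : ι, ∀ v ∈ T ∩ A i, a i ≤ (T.filter (H.Adj v)).card) ∧
      (∀ v ∈ S \ T, ∃ i, v ∈ A i) ∧
      ∑ v ∈ S \ T, (S.filter (H.Adj v)).card ≤ 2 * ∑ i, a i * ((S \ T) ∩ A i).card := by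
  classical
  intro S
  induction S using Finset.strongInduction with
  | _ S ih =>
  by_cases hbad : ∃ i, ∃ v ∈ S ∩ A i, (S.filter (H.Adj v)).card < a i
  · obtain ⟨i₀, v, hv, hdeg⟩ := hbad
    have hvS : v ∈ S := (mem_inter.mp hv).1
    have hvA : v ∈ A i₀ := (mem_inter.mp hv).2
    have hsub : S.erase v ⊂ S := erase_ssubset hvS
    obtain ⟨T, hTS, hTdeg, hTmem, hTsum⟩ := ih _ hsub
    have hvT : v ∉ T := fun h => (mem_erase.mp (hTS h)).1 rfl
    have hST : S \ T = insert v (S.erase v \ T) := by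
      ext u
      simp only [mem_sdiff, mem_insert, mem_erase]
      constructor
      · rintro ⟨hu, hu'⟩
        by_cases h : u = v
        · exact Or.inl h
        · exact Or.inr ⟨⟨h, hu⟩, hu'⟩
      · rintro (rfl | ⟨⟨_, hu⟩, hu'⟩)
        · exact ⟨hvS, hvT⟩
        · exact ⟨hu, hu'⟩
    have hvnot : v ∉ S.erase v \ T := fun h => (mem_erase.mp (mem_sdiff.mp h).1).1 rfl
    refine ⟨T, hTS.trans (erase_subset _ _), hTdeg, ?_, ?_⟩
    · intro u hu
      rw [hST] at hu
      rcases mem_insert.mp hu with rfl | hu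
      · exact ⟨i₀, hvA⟩
      · exact hTmem u hu
    · -- the sum bound
      have hSins : S = insert v (S.erase v) := (insert_erase hvS).symm
      have hstep : ∀ u : V, (S.filter (H.Adj u)).card ≤
          ((S.erase v).filter (H.Adj u)).card + (if H.Adj v u then 1 else 0) := by
        intro u
        conv_lhs => rw [hSins, filter_insert]
        split_ifs with h h'
        · exact card_insert_le _ _
        · exact absurd ((H.adj_comm u v).mp h) h'
        · exact Nat.le_succ_of_le le_rfl
        · exact le_rfl
      have h1 : ∑ u ∈ S.erase v \ T, (S.filter (H.Adj u)).card ≤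
          (∑ u ∈ S.erase v \ T, ((S.erase v).filter (H.Adj u)).card) +
            ((S.erase v \ T).filter (H.Adj v)).card := by
        rw [card_filter, ← Finset.sum_add_distrib]
        exact Finset.sum_le_sum fun u _ => hstep u
      have h2 : ((S.erase v \ T).filter (H.Adj v)).card ≤ (S.filter (H.Adj v)).card := by
        apply card_le_card
        exact filter_subset_filter _ ((sdiff_subset).trans (erase_subset _ _))
      have hdegv : (S.filter (H.Adj v)).card + 1 ≤ a i₀ := hdeg
      have hcardeq : ∀ j, ((S \ T) ∩ A j).card =
          ((S.erase v \ T) ∩ A j).card + (if j = i₀ then 1 else 0) := by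
        intro j
        split_ifs with h
        · subst h
          rw [hST, insert_inter_of_mem hvA, card_insert_of_notMem]
          intro hmem
          exact hvnot (mem_inter.mp hmem).1
        · have hvAj : v ∉ A j := fun hm => Finset.disjoint_left.mp (hdisj j i₀ h) hm hvA
          rw [hST, insert_inter_of_notMem hvAj, Nat.add_zero]
      have hrhs : ∑ j, a j * ((S \ T) ∩ A j).card =
          (∑ j, a j * ((S.erase v \ T) ∩ A j).card) + a i₀ := by
        simp only [hcardeq, Nat.mul_add, Finset.sum_add_distrib, mul_ite, mul_one, mul_zero]
        rw [Finset.sum_ite_eq' Finset.univ i₀ a]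
        simp
      rw [hrhs, hST, Finset.sum_insert hvnot]
      have h3 : ∑ u ∈ S.erase v \ T, (S.filter (H.Adj u)).card ≤
          (∑ u ∈ S.erase v \ T, ((S.erase v).filter (H.Adj u)).card) +
            (S.filter (H.Adj v)).card := h1.trans (Nat.add_le_add_left h2 _)
      omega
  · push_neg at hbad
    refine ⟨S, le_refl _, fun i v hv => hbad i v hv, by simp, by simp⟩



/-- Key lemma for finding dense subgraphs, Lemma 2.4. -/
theorem key_dense_subgraph_lemma
    (V : Type) [Fintype V] [DecidableEq V]
    (H : SimpleGraph V) [DecidableRel H.Adj]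
    (ι : Type) [Fintype ι] [Nonempty ι]
    (A : ι → Finset V) (hdisj : ∀ i j, i ≠ j → Disjoint (A i) (A j))
    (ηf : ι → ℝ) (hηf : ∀ i, 0 < ηf i)
    (a : ι → ℕ) (ha : ∀ i, 1 ≤ a i)
    (Aplus : ι → Finset V)
    (hAplus : ∀ i, ∀ v : V,
      v ∈ Aplus i ↔ v ∈ A i ∧ 2 * (1 + ηf i) * (a i : ℝ) ≤ (H.degree v : ℝ))
    (η : ℝ) (hη : η = Finset.univ.inf' Finset.univ_nonempty ηf)
    (hkey : (1 + 1 / η) * ∑ i : ι, (a i : ℝ) * ((A i \ Aplus i).card : ℝ)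
      < (Fintype.card V : ℝ)) :
    ∃ S : Finset V, S.Nonempty ∧
      (∀ i : ι, ∀ v ∈ S ∩ A i, a i ≤ (S.filter (H.Adj v)).card) ∧
      (Finset.univ \ S ⊆ Finset.univ.biUnion A) ∧
      ((Finset.univ \ S).card : ℝ) ≤ ∑ i : ι, (a i : ℝ) * ((A i \ S).card : ℝ) ∧
      ∑ i : ι, (a i : ℝ) * ((A i \ S).card : ℝ)
        ≤ (1 + 1 / η) * ∑ i : ι, (a i : ℝ) * ((A i \ Aplus i).card : ℝ) := by
  classical
  obtain ⟨T, hTuniv, hTdeg, hTmem, hTsum⟩ := key_aux H A hdisj a Finset.univ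
  -- basic facts about η
  have hηpos : 0 < η := by
    obtain ⟨i, _, hi⟩ := Finset.exists_mem_eq_inf' Finset.univ_nonempty ηf
    rw [hη, hi]; exact hηf i
  have hηle : ∀ i, η ≤ ηf i := fun i => hη ▸ Finset.inf'_le ηf (Finset.mem_univ i)
  have hdegeq : ∀ v : V, (Finset.univ.filter (H.Adj v)).card = H.degree v := by
    intro v; rw [← SimpleGraph.neighborFinset_eq_filter]; rfl
  have hPsub : ∀ i, Aplus i ⊆ A i := fun i v hv => ((hAplus i v).mp hv).1
  have hAT : ∀ i, (Finset.univ \ T) ∩ A i = A i \ T := by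
    intro i; ext v; simp only [Finset.mem_inter, Finset.mem_sdiff, Finset.mem_univ,
      true_and]; tauto
  -- real abbreviations
  set B : ℝ := ∑ i : ι, (a i : ℝ) * ((A i \ Aplus i).card : ℝ) with hB
  set X : ℝ := ∑ i : ι, (a i : ℝ) * ((Aplus i \ T).card : ℝ) with hX
  set Y : ℝ := ∑ i : ι, (a i : ℝ) * ((A i \ T).card : ℝ) with hY
  have hX0 : 0 ≤ X := Finset.sum_nonneg fun i _ => by positivity
  have hB0 : 0 ≤ B := Finset.sum_nonneg fun i _ => by positivity
  -- degree-sum upper bound from the process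
  have hdegsum : ∑ v ∈ Finset.univ \ T, (H.degree v : ℝ) ≤ 2 * Y := by
    have := hTsum
    simp only [hAT, hdegeq] at this
    calc ∑ v ∈ Finset.univ \ T, (H.degree v : ℝ)
        = ((∑ v ∈ Finset.univ \ T, H.degree v : ℕ) : ℝ) := by push_cast; rfl
      _ ≤ ((2 * ∑ i, a i * (A i \ T).card : ℕ) : ℝ) := by exact_mod_cast this
      _ = 2 * Y := by push_cast; rfl
  -- degree-sum lower bound from vertices in Aplus
  have hdisjP : ∀ i j, i ≠ j → Disjoint (Aplus i) (Aplus j) :=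
    fun i j hij => (hdisj i j hij).mono (hPsub i) (hPsub j)
  have hlow : 2 * (1 + η) * X ≤ ∑ v ∈ Finset.univ \ T, (H.degree v : ℝ) := by
    have hsplit : ∑ i, ∑ v ∈ Aplus i \ T, (H.degree v : ℝ)
        ≤ ∑ v ∈ Finset.univ \ T, (H.degree v : ℝ) := by
      rw [← Finset.sum_biUnion]
      · apply Finset.sum_le_sum_of_subset_of_nonneg
        · intro v hv
          obtain ⟨i, _, hvi⟩ := Finset.mem_biUnion.mp hv
          exact Finset.mem_sdiff.mpr ⟨Finset.mem_univ v, (Finset.mem_sdiff.mp hvi).2⟩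
        · exact fun v _ _ => by positivity
      · intro i _ j _ hij
        exact (hdisjP i j hij).mono Finset.sdiff_subset Finset.sdiff_subset
    refine le_trans ?_ hsplit
    rw [hX, Finset.mul_sum]
    apply Finset.sum_le_sum
    intro i _
    have hterm : ∀ v ∈ Aplus i \ T, 2 * (1 + η) * (a i : ℝ) ≤ (H.degree v : ℝ) := by
      intro v hv
      have hv' := ((hAplus i v).mp (Finset.mem_sdiff.mp hv).1).2
      refine le_trans ?_ hv'
      have : (0:ℝ) ≤ 2 * (a i : ℝ) := by positivity
      nlinarith [hηle i]
    calc 2 * (1 + η) * ((a i : ℝ) * ((Aplus i \ T).card : ℝ))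
        = ((Aplus i \ T).card : ℝ) * (2 * (1 + η) * (a i : ℝ)) := by ring
      _ ≤ ∑ v ∈ Aplus i \ T, (H.degree v : ℝ) := by
          rw [← nsmul_eq_mul]
          exact Finset.card_nsmul_le_sum _ _ _ hterm
  -- Y ≤ B + X
  have hYBX : Y ≤ B + X := by
    rw [hY, hB, hX, ← Finset.sum_add_distrib]
    apply Finset.sum_le_sum
    intro i _
    rw [← mul_add]
    have hcard : (A i \ T).card ≤ (A i \ Aplus i).card + (Aplus i \ T).card := by
      refine le_trans (Finset.card_le_card ?_) (Finset.card_union_le _ _)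
      intro v hv
      obtain ⟨hvA, hvT⟩ := Finset.mem_sdiff.mp hv
      by_cases h : v ∈ Aplus i
      · exact Finset.mem_union_right _ (Finset.mem_sdiff.mpr ⟨h, hvT⟩)
      · exact Finset.mem_union_left _ (Finset.mem_sdiff.mpr ⟨hvA, h⟩)
    have : ((A i \ T).card : ℝ) ≤ ((A i \ Aplus i).card : ℝ) + ((Aplus i \ T).card : ℝ) := by
      exact_mod_cast hcard
    have ha' : (0:ℝ) ≤ (a i : ℝ) := by positivity
    nlinarith
  -- conclude X ≤ B / η and Y ≤ (1 + 1/η) B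
  have hXY : (1 + η) * X ≤ Y := by nlinarith [hdegsum, hlow]
  have hXB : η * X ≤ B := by nlinarith
  have hYfin : Y ≤ (1 + 1 / η) * B := by
    have hXB' : X ≤ B / η := by
      rw [le_div_iff₀ hηpos]; nlinarith
    calc Y ≤ B + X := hYBX
      _ ≤ B + B / η := by linarith
      _ = (1 + 1 / η) * B := by field_simp
  -- |univ \ T| ≤ Y
  have hcardY : ((Finset.univ \ T).card : ℝ) ≤ Y := by
    have hsub : Finset.univ \ T ⊆ Finset.univ.biUnion (fun i => A i \ T) := by
      intro v hv
      obtain ⟨i, hvi⟩ := hTmem v hv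
      exact Finset.mem_biUnion.mpr ⟨i, Finset.mem_univ i,
        Finset.mem_sdiff.mpr ⟨hvi, (Finset.mem_sdiff.mp hv).2⟩⟩
    have h1 : (Finset.univ \ T).card ≤ ∑ i, (A i \ T).card :=
      le_trans (Finset.card_le_card hsub) (Finset.card_biUnion_le)
    have h2 : ((Finset.univ \ T).card : ℝ) ≤ ∑ i, ((A i \ T).card : ℝ) := by
      exact_mod_cast h1
    refine h2.trans (Finset.sum_le_sum fun i _ => ?_)
    have h3 : (1:ℝ) ≤ (a i : ℝ) := by exact_mod_cast ha i
    have h4 : (0:ℝ) ≤ ((A i \ T).card : ℝ) := by positivity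
    nlinarith
  -- T is nonempty
  have hTne : T.Nonempty := by
    rw [Finset.nonempty_iff_ne_empty]
    rintro rfl
    have : ((Finset.univ \ (∅ : Finset V)).card : ℝ) = (Fintype.card V : ℝ) := by
      simp [Finset.card_univ]
    rw [this] at hcardY
    linarith [hYfin, hkey]
  -- biUnion containment
  have hbi : Finset.univ \ T ⊆ Finset.univ.biUnion A := by
    intro v hv
    obtain ⟨i, hvi⟩ := hTmem v hv
    exact Finset.mem_biUnion.mpr ⟨i, Finset.mem_univ i, hvi⟩
  exact ⟨T, hTne, fun i v hv => hTdeg i v hv, hbi, hcardY, hYfin⟩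
end

section
/- Fix real constants c ∈ [0,1), ε ∈ (0,(1−c)/4], and d > 0 satisfying ∑_{i=1}^{∞} i·exp(−d²·i^ε) ≤ ε²/10⁵. For each positive integer i set μ_i = 4d·i^{(ε−1)/2} + 2ε and φ(i) = ((1−c)/4 − μ_i/2)·i. Then there exists n₀ such that every finite simple graph G on n ≥ n₀ vertices admits a tripartition V(G) = A ∪ B ∪ C such that: (1a) ((1−c)/2 − (11/10)ε)·n ≤ |A|, |B| ≤ ((1−c)/2 − (9/10)ε)·n; (1b) every vertex in C is both A-good and B-good; and (1c) ∑_{i≥1} i·|Vⁱ \ (Vⁱ_A ∩ Vⁱ_B)| ≤ ε²n/10⁴. -/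
set_option linter.unusedSectionVars false
set_option linter.deprecated false
set_option linter.unusedVariables false
set_option maxHeartbeats 1000000

/-- `μ_i = 4d·i^{(ε−1)/2} + 2ε`. -/
noncomputable def muFun (d ε : ℝ) (i : ℕ) : ℝ :=
  4 * d * (i : ℝ) ^ ((ε - 1) / 2) + 2 * ε

/-- `φ(i) = ((1−c)/4 − μ_i/2)·i`. -/
noncomputable def phiFun (c ε d : ℝ) (i : ℕ) : ℝ :=
  ((1 - c) / 4 - muFun d ε i / 2) * (i : ℝ)

/-- A vertex `v` is `S`-good if `d_S(v) ≥ 2(1 + μ_{d_G(v)})·φ(d_G(v))`. -/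
def IsGood {V : Type} [Fintype V] [DecidableEq V] (G : SimpleGraph V)
    [DecidableRel G.Adj] (c ε d : ℝ) (S : Finset V) (v : V) : Prop :=
  2 * (1 + muFun d ε (G.degree v)) * phiFun c ε d (G.degree v)
    ≤ ((S.filter (G.Adj v)).card : ℝ)

open Finset Real Classical

section Aux
-- quadratic bound for exp(-t)
lemma exp_neg_le_quad {t : ℝ} (ht : 0 ≤ t) : Real.exp (-t) ≤ 1 - t + t^2/2 := by
  have key : MonotoneOn (fun t : ℝ => 1 - t + t^2/2 - Real.exp (-t)) (Set.Ici 0) := by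
    apply monotoneOn_of_deriv_nonneg (convex_Ici 0)
    · fun_prop
    · fun_prop
    · intro x hx
      have hD : HasDerivAt (fun t : ℝ => 1 - t + t^2/2 - Real.exp (-t))
          (-1 + x + Real.exp (-x)) x := by
        have h1 : HasDerivAt (fun t : ℝ => Real.exp (-t)) (-Real.exp (-x)) x := by
          have := (Real.hasDerivAt_exp (-x)).comp x (hasDerivAt_neg x); simp at this; exact this
        have h2 : HasDerivAt (fun t : ℝ => 1 - t + t^2/2) (-1 + x) x := by
          have := ((hasDerivAt_id x).const_sub 1).add
            (((hasDerivAt_id x).pow 2).div_const 2)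
          simp [mul_comm] at this; exact this
        have h3 := h2.add h1.neg; simp only [neg_neg] at h3; exact h3
      rw [hD.deriv]
      have := Real.add_one_le_exp (-x)
      linarith
  have h0 := key (Set.self_mem_Ici) (Set.mem_Ici.2 ht) ht
  simp at h0
  linarith

lemma exp_le_quad {t : ℝ} (ht : 0 ≤ t) (ht1 : t ≤ 1) : Real.exp t ≤ 1 + t + t^2 := by
  have h := Real.exp_bound' ht ht1 (n := 2) (by norm_num)
  simp [Finset.sum_range_succ, Nat.factorial] at h
  nlinarith

variable {V : Type} [Fintype V] [DecidableEq V]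

/-- product weight -/
noncomputable def Wt (w : Fin 3 → ℝ) (ω : V → Fin 3) : ℝ := ∏ v, w (ω v)

/-- probability of an event -/
noncomputable def Pr (w : Fin 3 → ℝ) (E : (V → Fin 3) → Prop) : ℝ :=
  ∑ ω : V → Fin 3, Wt w ω * (if E ω then (1:ℝ) else 0)

variable {w : Fin 3 → ℝ}

lemma Wt_nonneg (hw : ∀ k, 0 ≤ w k) (ω : V → Fin 3) : 0 ≤ Wt w ω :=
  Finset.prod_nonneg fun v _ => hw (ω v)

lemma sum_Wt (hw1 : ∑ k, w k = 1) : ∑ ω : V → Fin 3, Wt w ω = 1 := by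
  have h := (Fintype.prod_sum (fun (_ : V) (k : Fin 3) => w k)).symm
  rw [hw1, Finset.prod_const_one] at h
  simpa [Wt] using h

lemma Pr_nonneg (hw : ∀ k, 0 ≤ w k) (E : (V → Fin 3) → Prop) : 0 ≤ Pr w E :=
  Finset.sum_nonneg fun ω _ => mul_nonneg (Wt_nonneg hw ω) (by positivity)

lemma Pr_mono (hw : ∀ k, 0 ≤ w k) {E F : (V → Fin 3) → Prop}
    (h : ∀ ω, E ω → F ω) : Pr w E ≤ Pr w F := by
  apply Finset.sum_le_sum
  intro ω _
  apply mul_le_mul_of_nonneg_left _ (Wt_nonneg hw ω)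
  by_cases hE : E ω
  · simp [hE, h ω hE]
  · simp [hE]; positivity

lemma Pr_or_le (hw : ∀ k, 0 ≤ w k) (E F : (V → Fin 3) → Prop) :
    Pr w (fun ω => E ω ∨ F ω) ≤ Pr w E + Pr w F := by
  rw [Pr, Pr, Pr, ← Finset.sum_add_distrib]
  apply Finset.sum_le_sum
  intro ω _
  rw [← mul_add]
  apply mul_le_mul_of_nonneg_left _ (Wt_nonneg hw ω)
  by_cases hE : E ω <;> by_cases hF : F ω <;> simp [hE, hF]

lemma exists_not_of_Pr_lt_one (hw : ∀ k, 0 ≤ w k) (hw1 : ∑ k, w k = 1)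
    (E : (V → Fin 3) → Prop) (h : Pr w E < 1) : ∃ ω, ¬ E ω := by
  by_contra hc
  push_neg at hc
  have h2 : Pr w E = ∑ ω : V → Fin 3, Wt w ω :=
    Finset.sum_congr rfl fun ω _ => by rw [if_pos (hc ω), mul_one]
  rw [h2, sum_Wt hw1] at h
  linarith

lemma markov (hw : ∀ k, 0 ≤ w k) (g : (V → Fin 3) → ℝ) (hg : ∀ ω, 0 ≤ g ω)
    {a : ℝ} (ha : 0 < a) :
    Pr w (fun ω => a ≤ g ω) ≤ (∑ ω : V → Fin 3, Wt w ω * g ω) / a := by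
  rw [le_div_iff₀ ha, Pr, Finset.sum_mul]
  apply Finset.sum_le_sum
  intro ω _
  rw [mul_assoc]
  apply mul_le_mul_of_nonneg_left _ (Wt_nonneg hw ω)
  by_cases h : a ≤ g ω
  · rw [if_pos h, one_mul]; exact h
  · rw [if_neg h, zero_mul]; exact hg ω

lemma mgf_factor (hw1 : ∑ k, w k = 1) (T : Finset V) (a : Fin 3) (e : ℝ) :
    ∑ ω : V → Fin 3, ∏ v, (w (ω v) * (if v ∈ T ∧ ω v = a then e else 1))
      = (1 + w a * (e - 1)) ^ T.card := by
  rw [← Fintype.prod_sum (fun (v : V) (k : Fin 3) => w k * (if v ∈ T ∧ k = a then e else 1))]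
  have hfac : ∀ v : V, (∑ k : Fin 3, w k * (if v ∈ T ∧ k = a then e else 1))
      = if v ∈ T then 1 + w a * (e - 1) else 1 := by
    intro v
    by_cases hv : v ∈ T
    · simp only [hv, true_and, if_true]
      have h1 : ∀ k : Fin 3, w k * (if k = a then e else 1)
          = w k + (if k = a then w a * (e - 1) else 0) := by
        intro k; by_cases hk : k = a <;> simp [hk] <;> ring
      rw [Finset.sum_congr rfl (fun k _ => h1 k), Finset.sum_add_distrib, hw1,
        Finset.sum_ite_eq' univ a (fun _ => w a * (e - 1))]
      simp
    · simp only [hv, false_and, if_false, mul_one, hw1]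
  rw [Finset.prod_congr rfl (fun v _ => hfac v), Finset.prod_ite_mem,
    Finset.univ_inter, Finset.prod_const]

lemma prod_indicator_eq_exp (T : Finset V) (a : Fin 3) (t : ℝ) (ω : V → Fin 3) :
    ∏ v : V, (if v ∈ T ∧ ω v = a then Real.exp t else 1)
      = Real.exp (t * ((T.filter fun v => ω v = a).card : ℕ)) := by
  have h : ∀ v : V, (if v ∈ T ∧ ω v = a then Real.exp t else 1)
      = if v ∈ T.filter (fun v => ω v = a) then Real.exp t else 1 := by
    intro v; simp [Finset.mem_filter]
  rw [Finset.prod_congr rfl (fun v _ => h v), Finset.prod_ite_mem, Finset.univ_inter,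
    Finset.prod_const, ← Real.exp_nat_mul]
  ring_nf

lemma chernoff_lower_core (hw : ∀ k, 0 ≤ w k) (hw1 : ∑ k, w k = 1)
    (T : Finset V) (a : Fin 3) (m t : ℝ) (ht : 0 ≤ t) :
    Pr w (fun ω => ((T.filter fun v => ω v = a).card : ℝ) ≤ m)
      ≤ Real.exp (t * m) * (1 + w a * (Real.exp (-t) - 1)) ^ T.card := by
  rw [← mgf_factor hw1 T a (Real.exp (-t)), Finset.mul_sum]
  apply Finset.sum_le_sum
  intro ω _
  rw [Finset.prod_mul_distrib, ← Wt, prod_indicator_eq_exp T a (-t) ω]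
  set k : ℝ := (((T.filter fun v => ω v = a).card : ℕ) : ℝ)
  have hk : (0:ℝ) ≤ k := Nat.cast_nonneg _
  have hW := Finset.prod_nonneg (fun v (_ : v ∈ univ) => hw (ω v))
  by_cases hE : k ≤ m
  · rw [if_pos hE, mul_one]
    have h1 : (1:ℝ) ≤ Real.exp (t * m) * Real.exp (-t * k) := by
      rw [← Real.exp_add]
      have : 0 ≤ t * m + -t * k := by nlinarith
      calc (1:ℝ) = Real.exp 0 := by rw [Real.exp_zero]
        _ ≤ _ := Real.exp_le_exp.2 this
    calc Wt w ω = 1 * Wt w ω := (one_mul _).symm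
      _ ≤ (Real.exp (t * m) * Real.exp (-t * k)) * Wt w ω := by
          apply mul_le_mul_of_nonneg_right h1 hW
      _ = Real.exp (t * m) * (Wt w ω * Real.exp (-t * k)) := by ring
  · rw [if_neg hE, mul_zero]
    positivity
lemma chernoff_upper_core (hw : ∀ k, 0 ≤ w k) (hw1 : ∑ k, w k = 1)
    (T : Finset V) (a : Fin 3) (m t : ℝ) (ht : 0 ≤ t) :
    Pr w (fun ω => m ≤ ((T.filter fun v => ω v = a).card : ℝ))
      ≤ Real.exp (-(t * m)) * (1 + w a * (Real.exp t - 1)) ^ T.card := by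
  rw [← mgf_factor hw1 T a (Real.exp t), Finset.mul_sum]
  apply Finset.sum_le_sum
  intro ω _
  rw [Finset.prod_mul_distrib, ← Wt, prod_indicator_eq_exp T a t ω]
  set k : ℝ := (((T.filter fun v => ω v = a).card : ℕ) : ℝ)
  have hk : (0:ℝ) ≤ k := Nat.cast_nonneg _
  have hW := Finset.prod_nonneg (fun v (_ : v ∈ univ) => hw (ω v))
  by_cases hE : m ≤ k
  · rw [if_pos hE, mul_one]
    have h1 : (1:ℝ) ≤ Real.exp (-(t * m)) * Real.exp (t * k) := by
      rw [← Real.exp_add]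
      have : 0 ≤ -(t * m) + t * k := by nlinarith
      calc (1:ℝ) = Real.exp 0 := by rw [Real.exp_zero]
        _ ≤ _ := Real.exp_le_exp.2 this
    calc Wt w ω = 1 * Wt w ω := (one_mul _).symm
      _ ≤ (Real.exp (-(t * m)) * Real.exp (t * k)) * Wt w ω := by
          apply mul_le_mul_of_nonneg_right h1 hW
      _ = Real.exp (-(t * m)) * (Wt w ω * Real.exp (t * k)) := by ring
  · rw [if_neg hE, mul_zero]
    positivity

lemma chernoff_lower_tail (hw : ∀ k, 0 ≤ w k) (hw1 : ∑ k, w k = 1)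
    (T : Finset V) (a : Fin 3) (hq : 0 < w a) (hT : 0 < T.card)
    {lam : ℝ} (hlam : 0 ≤ lam) :
    Pr w (fun ω => ((T.filter fun v => ω v = a).card : ℝ) ≤ w a * T.card - lam)
      ≤ Real.exp (-lam^2 / (2 * (w a * T.card))) := by
  set q := w a with hqdef
  set i : ℝ := ((T.card : ℕ) : ℝ) with hi
  have hi0 : (0:ℝ) < i := by rw [hi]; exact_mod_cast hT
  have hqi : 0 < q * i := mul_pos hq hi0
  set t : ℝ := lam / (q * i) with htdef
  have ht : 0 ≤ t := div_nonneg hlam hqi.le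
  have hq1 : q ≤ 1 := by
    have := Finset.single_le_sum (fun (k : Fin 3) _ => hw k) (Finset.mem_univ a)
    rw [hw1] at this; exact this
  have hexp0 : (0:ℝ) < Real.exp (-t) := Real.exp_pos _
  have hb0 : 0 ≤ 1 + q * (Real.exp (-t) - 1) := by nlinarith
  have hb : 1 + q * (Real.exp (-t) - 1) ≤ Real.exp (q * (-t + t^2/2)) := by
    have h1 := exp_neg_le_quad ht
    have h3 : q * (Real.exp (-t) - 1) ≤ q * (-t + t^2/2) := by nlinarith
    have h2 := Real.add_one_le_exp (q * (Real.exp (-t) - 1))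
    calc 1 + q * (Real.exp (-t) - 1) = q * (Real.exp (-t) - 1) + 1 := by ring
      _ ≤ Real.exp (q * (Real.exp (-t) - 1)) := h2
      _ ≤ _ := Real.exp_le_exp.2 h3
  calc Pr w (fun ω => ((T.filter fun v => ω v = a).card : ℝ) ≤ q * i - lam)
      ≤ Real.exp (t * (q * i - lam)) * (1 + q * (Real.exp (-t) - 1)) ^ T.card :=
        chernoff_lower_core hw hw1 T a _ t ht
    _ ≤ Real.exp (t * (q * i - lam)) * (Real.exp (q * (-t + t^2/2))) ^ T.card := by
        exact mul_le_mul_of_nonneg_left (pow_le_pow_left₀ hb0 hb _) (Real.exp_pos _).le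
    _ = Real.exp (t * (q * i - lam) + i * (q * (-t + t^2/2))) := by
        rw [← Real.exp_nat_mul, ← Real.exp_add, hi]
    _ ≤ Real.exp (-lam^2 / (2 * (q * i))) := by
        apply Real.exp_le_exp.2
        rw [htdef]
        apply le_of_eq
        field_simp
        ring
lemma chernoff_upper_tail (hw : ∀ k, 0 ≤ w k) (hw1 : ∑ k, w k = 1)
    (T : Finset V) (a : Fin 3) (hq : 0 < w a) (hT : 0 < T.card)
    {lam : ℝ} (hlam : 0 ≤ lam) (hlam2 : lam ≤ 2 * (w a * T.card)) :
    Pr w (fun ω => w a * T.card + lam ≤ ((T.filter fun v => ω v = a).card : ℝ))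
      ≤ Real.exp (-lam^2 / (4 * (w a * T.card))) := by
  set q := w a with hqdef
  set i : ℝ := ((T.card : ℕ) : ℝ) with hi
  have hi0 : (0:ℝ) < i := by rw [hi]; exact_mod_cast hT
  have hqi : 0 < q * i := mul_pos hq hi0
  set t : ℝ := lam / (2 * (q * i)) with htdef
  have ht : 0 ≤ t := by positivity
  have ht1 : t ≤ 1 := by rw [htdef, div_le_one (by positivity)]; linarith
  have hq1 : q ≤ 1 := by
    have := Finset.single_le_sum (fun (k : Fin 3) _ => hw k) (Finset.mem_univ a)
    rw [hw1] at this; exact this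
  have hexp0 : (0:ℝ) < Real.exp t := Real.exp_pos _
  have hb0 : 0 ≤ 1 + q * (Real.exp t - 1) := by nlinarith [Real.one_le_exp ht]
  have hb : 1 + q * (Real.exp t - 1) ≤ Real.exp (q * (t + t^2)) := by
    have h1 := exp_le_quad ht ht1
    have h3 : q * (Real.exp t - 1) ≤ q * (t + t^2) := by nlinarith
    have h2 := Real.add_one_le_exp (q * (Real.exp t - 1))
    calc 1 + q * (Real.exp t - 1) = q * (Real.exp t - 1) + 1 := by ring
      _ ≤ Real.exp (q * (Real.exp t - 1)) := h2
      _ ≤ _ := Real.exp_le_exp.2 h3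
  calc Pr w (fun ω => q * i + lam ≤ ((T.filter fun v => ω v = a).card : ℝ))
      ≤ Real.exp (-(t * (q * i + lam))) * (1 + q * (Real.exp t - 1)) ^ T.card :=
        chernoff_upper_core hw hw1 T a _ t ht
    _ ≤ Real.exp (-(t * (q * i + lam))) * (Real.exp (q * (t + t^2))) ^ T.card := by
        exact mul_le_mul_of_nonneg_left (pow_le_pow_left₀ hb0 hb _) (Real.exp_pos _).le
    _ = Real.exp (-(t * (q * i + lam)) + i * (q * (t + t^2))) := by
        rw [← Real.exp_nat_mul, ← Real.exp_add, hi]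
    _ ≤ Real.exp (-lam^2 / (4 * (q * i))) := by
        apply Real.exp_le_exp.2
        rw [htdef]
        apply le_of_eq
        field_simp
        ring

lemma threshold_le {c ε d : ℝ} (hc0 : 0 ≤ c) (hc1 : c < 1) (hε0 : 0 < ε) (hd : 0 < d)
    (i : ℕ) :
    2 * (1 + muFun d ε i) * phiFun c ε d i
      ≤ ((1 - c) / 2 - ε) * (i : ℝ) - (2 * d * (i : ℝ) ^ ((ε - 1) / 2)) * (i : ℝ) := by
  have hI : (0:ℝ) ≤ (i:ℝ) := Nat.cast_nonneg i
  set r : ℝ := d * (i : ℝ) ^ ((ε - 1) / 2) with hr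
  have hr0 : 0 ≤ r := by positivity
  have hcoef : 2 * (1 + muFun d ε i) * ((1 - c) / 4 - muFun d ε i / 2)
      ≤ ((1 - c) / 2 - ε) - 2 * r := by
    have hmu : muFun d ε i = 4 * r + 2 * ε := by rw [muFun, hr]; ring
    rw [hmu]
    nlinarith [sq_nonneg (4 * r + 2 * ε)]
  calc 2 * (1 + muFun d ε i) * phiFun c ε d i
      = (2 * (1 + muFun d ε i) * ((1 - c) / 4 - muFun d ε i / 2)) * (i:ℝ) := by
        rw [phiFun]; ring
    _ ≤ (((1 - c) / 2 - ε) - 2 * r) * (i:ℝ) := mul_le_mul_of_nonneg_right hcoef hI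
    _ = ((1 - c) / 2 - ε) * (i : ℝ) - (2 * d * (i : ℝ) ^ ((ε - 1) / 2)) * (i : ℝ) := by
        rw [hr]; ring

variable {V : Type} [Fintype V] [DecidableEq V] (G : SimpleGraph V) [DecidableRel G.Adj]

lemma good_of_degree_zero (c ε d : ℝ) (S : Finset V) (v : V) (h : G.degree v = 0) :
    IsGood G c ε d S v := by
  unfold IsGood phiFun
  rw [h]
  simp

lemma isGood_mono (c ε d : ℝ) {S S' : Finset V} (h : S ⊆ S') (v : V)
    (hg : IsGood G c ε d S v) : IsGood G c ε d S' v := by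
  refine hg.trans ?_
  exact_mod_cast Finset.card_le_card (Finset.filter_subset_filter _ h)

lemma card_filter_adj (a : Fin 3) (ω : V → Fin 3) (v : V) :
    (((univ.filter (fun u => ω u = a)).filter (G.Adj v)).card : ℝ)
      = (((G.neighborFinset v).filter (fun u => ω u = a)).card : ℝ) := by
  congr 1
  rw [SimpleGraph.neighborFinset_eq_filter, Finset.filter_filter, Finset.filter_filter]
  congr 1
  ext u
  simp [Finset.mem_filter, and_comm]

lemma degree_lt_n (v : V) : G.degree v < Fintype.card V := by
  classical
  have := SimpleGraph.degree_lt_card_verts (G := G) v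
  exact this

lemma tsum_group (b : V → Prop) :
    (∑' i : ℕ, (i:ℝ) * (((univ.filter (fun v => G.degree v = i ∧ b v)).card : ℕ) : ℝ))
      = ∑ v : V, (G.degree v : ℝ) * (if b v then 1 else 0) := by
  classical
  rw [tsum_eq_sum (s := Finset.range (Fintype.card V)) ?_]
  · have hterm : ∀ i ∈ Finset.range (Fintype.card V),
        (i:ℝ) * (((univ.filter (fun v => G.degree v = i ∧ b v)).card : ℕ) : ℝ)
          = ∑ v : V, (if G.degree v = i ∧ b v then (i:ℝ) else 0) := by
      intro i _
      rw [Finset.card_filter]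
      push_cast
      rw [Finset.mul_sum]
      exact Finset.sum_congr rfl fun v _ => by rw [mul_ite, mul_one, mul_zero]
    rw [Finset.sum_congr rfl hterm, Finset.sum_comm]
    apply Finset.sum_congr rfl
    intro v _
    by_cases hb : b v
    · simp only [hb, and_true, if_true, mul_one]
      rw [Finset.sum_eq_single (G.degree v)]
      · rw [if_pos rfl]
      · intro j _ hj
        rw [if_neg (fun h => hj h.symm)]
      · intro habs
        exact absurd (Finset.mem_range.2 (degree_lt_n G v)) habs
    · simp [hb]
  · intro i hi
    rw [Finset.mem_range, not_lt] at hi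
    have : (univ.filter (fun v => G.degree v = i ∧ b v)) = ∅ := by
      apply Finset.eq_empty_of_forall_notMem
      intro v hv
      rw [Finset.mem_filter] at hv
      have := degree_lt_n G v
      omega
    rw [this]
    simp

variable (G : SimpleGraph V) [DecidableRel G.Adj]

lemma bad_prob {c ε d : ℝ} (hc0 : 0 ≤ c) (hc1 : c < 1) (hε0 : 0 < ε)
    (hε1 : ε ≤ (1 - c) / 4) (hd : 0 < d) {w : Fin 3 → ℝ} (hw : ∀ k, 0 ≤ w k)
    (hw1 : ∑ k, w k = 1) (a : Fin 3) (hwa : w a = (1 - c) / 2 - ε)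
    (v : V) (hdeg : 0 < G.degree v) :
    Pr w (fun ω => ¬ IsGood G c ε d (univ.filter fun u => ω u = a) v)
      ≤ Real.exp (-(d^2) * ((G.degree v : ℕ) : ℝ) ^ ε) := by
  set i : ℕ := G.degree v with hidef
  set I : ℝ := ((i : ℕ) : ℝ) with hIdef
  have hI1 : (1:ℝ) ≤ I := by rw [hIdef]; exact_mod_cast hdeg
  have hI0 : (0:ℝ) < I := lt_of_lt_of_le one_pos hI1
  set p : ℝ := (1 - c) / 2 - ε with hpdef
  have hp0 : 0 < p := by rw [hpdef]; linarith
  have hp2 : p ≤ 1/2 := by rw [hpdef]; linarith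
  set X : ℝ := I ^ ((ε - 1) / 2) with hXdef
  have hX0 : 0 ≤ X := by rw [hXdef]; positivity
  set lam : ℝ := 2 * d * X * I with hlamdef
  have hlam : 0 ≤ lam := by rw [hlamdef]; positivity
  set E : ℝ := I ^ ε with hEdef
  have hE0 : 0 < E := by rw [hEdef]; positivity
  have hXE : X ^ 2 * I = E := by
    rw [hXdef, hEdef]
    have h1 : (I ^ ((ε-1)/2)) ^ 2 = I ^ (ε - 1) := by
      rw [← Real.rpow_natCast (I ^ ((ε-1)/2)) 2, ← Real.rpow_mul hI0.le]
      congr 1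
      push_cast
      ring
    have h2 : I ^ (ε - 1) * I = I ^ (ε - 1) * I ^ (1:ℝ) := by rw [Real.rpow_one]
    rw [h1, h2, ← Real.rpow_add hI0]
    congr 1
    ring
  set T : Finset V := G.neighborFinset v with hTdef
  have hTcard : T.card = i := by rw [hTdef, hidef]; exact G.card_neighborFinset_eq_degree v
  have hstep1 : Pr w (fun ω => ¬ IsGood G c ε d (univ.filter fun u => ω u = a) v)
      ≤ Pr w (fun ω => ((T.filter fun u => ω u = a).card : ℝ) ≤ w a * T.card - lam) := by
    apply Pr_mono hw
    intro ω hω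
    rw [IsGood, not_le] at hω
    have h2 := threshold_le (d := d) hc0 hc1 hε0 hd i
    have h3 := card_filter_adj G a ω v
    rw [h3] at hω
    have : ((T.filter fun u => ω u = a).card : ℝ) < p * I - lam := by
      rw [hTdef]
      calc (((G.neighborFinset v).filter fun u => ω u = a).card : ℝ)
          < 2 * (1 + muFun d ε i) * phiFun c ε d i := hω
        _ ≤ p * I - lam := by rw [hpdef, hlamdef, hXdef]; exact h2
    rw [hwa, hTcard]
    exact le_of_lt this
  refine hstep1.trans ?_
  have hchern := chernoff_lower_tail hw hw1 T a (by rw [hwa]; exact hp0)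
    (by rw [hTcard]; exact hdeg) hlam
  refine hchern.trans ?_
  apply Real.exp_le_exp.2
  rw [hwa, hTcard]
  have hlamsq : lam ^ 2 = 4 * d^2 * E * I := by
    rw [hlamdef, ← hXE]; ring
  rw [hlamsq, div_le_iff₀ (by positivity)]
  have hprod : 0 ≤ d^2 * E * ((i:ℕ):ℝ) := by positivity
  have h4 := mul_nonneg (show (0:ℝ) ≤ 4 - 2*p by rw [hpdef]; linarith) hprod
  have hkey : 2 * p * (d^2 * E * ((i:ℕ):ℝ)) ≤ 4 * (d^2 * E * ((i:ℕ):ℝ)) := by nlinarith [h4]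
  nlinarith [hkey]

end Aux
open scoped Classical in
/-- Lemma 3.2, the initial random tripartition. -/
theorem initial_tripartition_internal (c ε d : ℝ) (hc0 : 0 ≤ c) (hc1 : c < 1)
    (hε0 : 0 < ε) (hε1 : ε ≤ (1 - c) / 4) (hd : 0 < d)
    (hsummable : Summable (fun i : ℕ =>
      ((i + 1 : ℕ) : ℝ) * Real.exp (-(d ^ 2) * ((i + 1 : ℕ) : ℝ) ^ ε)))
    (hsum : ∑' i : ℕ, ((i + 1 : ℕ) : ℝ) * Real.exp (-(d ^ 2) * ((i + 1 : ℕ) : ℝ) ^ ε)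
      ≤ ε ^ 2 / 10 ^ 5) :
    ∃ n₀ : ℕ, ∀ (V : Type) [Fintype V] [DecidableEq V]
      (G : SimpleGraph V) [DecidableRel G.Adj],
      n₀ ≤ Fintype.card V →
      ∃ A B C' : Finset V,
        Disjoint A B ∧ Disjoint A C' ∧ Disjoint B C' ∧ A ∪ B ∪ C' = Finset.univ ∧
        ((1 - c) / 2 - (11 / 10) * ε) * (Fintype.card V : ℝ) ≤ (A.card : ℝ) ∧
        (A.card : ℝ) ≤ ((1 - c) / 2 - (9 / 10) * ε) * (Fintype.card V : ℝ) ∧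
        ((1 - c) / 2 - (11 / 10) * ε) * (Fintype.card V : ℝ) ≤ (B.card : ℝ) ∧
        (B.card : ℝ) ≤ ((1 - c) / 2 - (9 / 10) * ε) * (Fintype.card V : ℝ) ∧
        (∀ v ∈ C', IsGood G c ε d A v ∧ IsGood G c ε d B v) ∧
        ∑' i : ℕ, (i : ℝ) * ((Finset.univ.filter (fun v : V =>
            G.degree v = i ∧ ¬(IsGood G c ε d A v ∧ IsGood G c ε d B v))).card : ℝ)
          ≤ ε ^ 2 * (Fintype.card V : ℝ) / 10 ^ 4 := by
  refine ⟨⌈(3750:ℝ)/ε^2⌉₊ + 1, ?_⟩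
  intro V _ _ G _ hn
  have hn1 : 0 < Fintype.card V := lt_of_lt_of_le (Nat.succ_pos _) hn
  set n : ℕ := Fintype.card V with hndef
  have hn0R : (0:ℝ) < (n:ℝ) := by exact_mod_cast hn1
  have hnR : (3750:ℝ)/ε^2 ≤ (n:ℝ) := by
    refine le_trans (Nat.le_ceil _) ?_
    exact_mod_cast le_trans (Nat.le_succ _) hn
  have hε4 : ε ≤ 1/4 := by linarith
  have hεn : (0:ℝ) ≤ ε * n := by positivity
  have h3750 : (3750:ℝ) ≤ ε^2 * n := by
    rw [div_le_iff₀ (by positivity)] at hnR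
    linarith
  set p : ℝ := (1-c)/2 - ε with hpdef
  have hp0 : 0 < p := by rw [hpdef]; linarith
  have hpε : ε ≤ p := by rw [hpdef]; linarith
  have hp2 : p ≤ 1/2 := by rw [hpdef]; linarith
  set w : Fin 3 → ℝ := ![p, p, c + 2*ε] with hwdef
  have hw : ∀ k, 0 ≤ w k := by
    intro k
    fin_cases k <;> simp [hwdef] <;> linarith
  have hw1 : ∑ k, w k = 1 := by
    rw [Fin.sum_univ_three]
    show p + p + (c + 2*ε) = 1
    rw [hpdef]; ring
  have hw0 : w 0 = p := rfl
  have hw1a : w 1 = p := rfl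
  set lam0 : ℝ := ε * n / 25 with hlam0def
  have hlam0 : 0 ≤ lam0 := by positivity
  set aY : ℝ := ε^2 * n / (2*10^4) with haYdef
  have haY : 0 < aY := by positivity
  -- the bad-sum random variable
  set Y : (V → Fin 3) → ℝ := fun ω => ∑ v : V, (G.degree v : ℝ) *
    (if ¬(IsGood G c ε d (univ.filter fun u => ω u = 0) v ∧
          IsGood G c ε d (univ.filter fun u => ω u = 1) v) then (1:ℝ) else 0) with hYdef
  have hYnonneg : ∀ ω, 0 ≤ Y ω := by
    intro ω
    apply Finset.sum_nonneg
    intro v _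
    positivity
  -- numeric bound for the exponential tails
  have hexp8 : ∀ x : ℝ, ε^2 * n / 1250 ≤ x → Real.exp (-x) ≤ 1/8 := by
    intro x hx
    have hx3 : (3:ℝ) ≤ x := by
      have : (3:ℝ) ≤ ε^2*n/1250 := by linarith
      linarith
    have h2e : (2:ℝ) ≤ Real.exp 1 := by
      have := Real.add_one_le_exp 1
      linarith
    have h8 : (8:ℝ) ≤ Real.exp 3 := by
      have h1 : Real.exp ((3:ℕ) * (1:ℝ)) = Real.exp 1 ^ (3:ℕ) := Real.exp_nat_mul 1 3
      have h2 : (2:ℝ)^(3:ℕ) ≤ Real.exp 1 ^ (3:ℕ) := pow_le_pow_left₀ (by norm_num) h2e 3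
      have h3 : ((3:ℕ):ℝ) * (1:ℝ) = (3:ℝ) := by norm_num
      rw [h3] at h1
      rw [h1]
      norm_num at h2 ⊢
      linarith
    calc Real.exp (-x) ≤ Real.exp (-3) := Real.exp_le_exp.2 (by linarith)
      _ = (Real.exp 3)⁻¹ := by rw [← Real.exp_neg]
      _ ≤ 8⁻¹ := by
          apply inv_anti₀ (by norm_num) h8
      _ = 1/8 := by norm_num
  have hcardU : ((univ : Finset V).card : ℝ) = (n : ℝ) := by
    rw [Finset.card_univ]
  have hcardUpos : 0 < (univ : Finset V).card := by
    rw [Finset.card_univ]; exact hn1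
  -- four size-tail bounds
  have hAlow : Pr w (fun ω : V → Fin 3 =>
      ((univ.filter fun u : V => ω u = 0).card : ℝ) ≤ p * n - lam0) ≤ 1/8 := by
    have h := chernoff_lower_tail (V := V) hw hw1 univ 0 (by rw [hw0]; exact hp0)
      hcardUpos hlam0
    rw [hw0, hcardU] at h
    refine h.trans ?_
    refine le_trans (Real.exp_le_exp.2 ?_) (hexp8 (ε^2*n/1250) le_rfl)
    rw [neg_div, neg_le_neg_iff, div_le_div_iff₀ (by norm_num) (by positivity), hlam0def]
    nlinarith [sq_nonneg (ε*n), mul_nonneg (mul_nonneg hεn hεn) hn0R.le, hεn]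
  have hAhigh : Pr w (fun ω : V → Fin 3 =>
      p * n + lam0 ≤ ((univ.filter fun u : V => ω u = 0).card : ℝ)) ≤ 1/8 := by
    have h := chernoff_upper_tail (V := V) hw hw1 univ 0 (by rw [hw0]; exact hp0)
      hcardUpos hlam0 (by rw [hw0, hcardU, hlam0def]; nlinarith)
    rw [hw0, hcardU] at h
    refine h.trans ?_
    refine le_trans (Real.exp_le_exp.2 ?_) (hexp8 (ε^2*n/1250) le_rfl)
    rw [neg_div, neg_le_neg_iff, div_le_div_iff₀ (by norm_num) (by positivity), hlam0def]
    nlinarith [hεn]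
  have hBlow : Pr w (fun ω : V → Fin 3 =>
      ((univ.filter fun u : V => ω u = 1).card : ℝ) ≤ p * n - lam0) ≤ 1/8 := by
    have h := chernoff_lower_tail (V := V) hw hw1 univ 1 (by rw [hw1a]; exact hp0)
      hcardUpos hlam0
    rw [hw1a, hcardU] at h
    refine h.trans ?_
    refine le_trans (Real.exp_le_exp.2 ?_) (hexp8 (ε^2*n/1250) le_rfl)
    rw [neg_div, neg_le_neg_iff, div_le_div_iff₀ (by norm_num) (by positivity), hlam0def]
    nlinarith [hεn]
  have hBhigh : Pr w (fun ω : V → Fin 3 =>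
      p * n + lam0 ≤ ((univ.filter fun u : V => ω u = 1).card : ℝ)) ≤ 1/8 := by
    have h := chernoff_upper_tail (V := V) hw hw1 univ 1 (by rw [hw1a]; exact hp0)
      hcardUpos hlam0 (by rw [hw1a, hcardU, hlam0def]; nlinarith)
    rw [hw1a, hcardU] at h
    refine h.trans ?_
    refine le_trans (Real.exp_le_exp.2 ?_) (hexp8 (ε^2*n/1250) le_rfl)
    rw [neg_div, neg_le_neg_iff, div_le_div_iff₀ (by norm_num) (by positivity), hlam0def]
    nlinarith [hεn]
  -- the bad-sum tail bound via Markov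
  have hYtail : Pr w (fun ω => aY ≤ Y ω) ≤ 2/5 := by
    have hmar := markov (V := V) hw Y hYnonneg haY
    refine hmar.trans ?_
    have hEY : ∑ ω : V → Fin 3, Wt w ω * Y ω ≤ (n:ℝ) * (2 * (ε^2/10^5)) := by
      have hswap : ∑ ω : V → Fin 3, Wt w ω * Y ω
          = ∑ v : V, ∑ ω : V → Fin 3, Wt w ω * ((G.degree v : ℝ) *
            (if ¬(IsGood G c ε d (univ.filter fun u => ω u = 0) v ∧
              IsGood G c ε d (univ.filter fun u => ω u = 1) v) then (1:ℝ) else 0)) := by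
        simp only [hYdef, Finset.mul_sum]
        exact Finset.sum_comm
      rw [hswap]
      have hbound : ∀ v : V, ∑ ω : V → Fin 3, Wt w ω * ((G.degree v : ℝ) *
            (if ¬(IsGood G c ε d (univ.filter fun u => ω u = 0) v ∧
              IsGood G c ε d (univ.filter fun u => ω u = 1) v) then (1:ℝ) else 0))
          ≤ 2 * (ε^2/10^5) := by
        intro v
        have hpull : ∑ ω : V → Fin 3, Wt w ω * ((G.degree v : ℝ) *
            (if ¬(IsGood G c ε d (univ.filter fun u => ω u = 0) v ∧
              IsGood G c ε d (univ.filter fun u => ω u = 1) v) then (1:ℝ) else 0))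
            = (G.degree v : ℝ) * Pr w (fun ω =>
              ¬(IsGood G c ε d (univ.filter fun u => ω u = 0) v ∧
                IsGood G c ε d (univ.filter fun u => ω u = 1) v)) := by
          rw [Pr, Finset.mul_sum]
          exact Finset.sum_congr rfl fun ω _ => by ring
        rw [hpull]
        by_cases hdeg0 : G.degree v = 0
        · rw [hdeg0]
          norm_num
          positivity
        · have hdeg : 0 < G.degree v := Nat.pos_of_ne_zero hdeg0
          have hPrle : Pr w (fun ω =>
              ¬(IsGood G c ε d (univ.filter fun u => ω u = 0) v ∧
                IsGood G c ε d (univ.filter fun u => ω u = 1) v))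
              ≤ 2 * Real.exp (-(d^2) * ((G.degree v : ℕ) : ℝ) ^ ε) := by
            have hor : Pr w (fun ω =>
                ¬(IsGood G c ε d (univ.filter fun u => ω u = 0) v ∧
                  IsGood G c ε d (univ.filter fun u => ω u = 1) v))
                ≤ Pr w (fun ω => ¬ IsGood G c ε d (univ.filter fun u => ω u = 0) v)
                  + Pr w (fun ω => ¬ IsGood G c ε d (univ.filter fun u => ω u = 1) v) := by
              refine le_trans (Pr_mono hw ?_) (Pr_or_le hw _ _)
              intro ω hω
              by_contra hcon
              push_neg at hcon
              exact hω ⟨hcon.1, hcon.2⟩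
            have hA := bad_prob G hc0 hc1 hε0 hε1 hd hw hw1 0 hw0 v hdeg
            have hB := bad_prob G hc0 hc1 hε0 hε1 hd hw hw1 1 hw1a v hdeg
            linarith
          have hterm : (G.degree v : ℝ) * Real.exp (-(d^2) * ((G.degree v : ℕ) : ℝ) ^ ε)
              ≤ ε^2/10^5 := by
            have hle := hsummable.le_tsum (G.degree v - 1) (fun j _ => by positivity)
            have hcast : (G.degree v - 1 + 1 : ℕ) = G.degree v :=
              Nat.succ_pred_eq_of_pos hdeg
            rw [hcast] at hle
            exact hle.trans hsum
          have hPrnn := Pr_nonneg (V := V) hw (fun ω =>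
              ¬(IsGood G c ε d (univ.filter fun u => ω u = 0) v ∧
                IsGood G c ε d (univ.filter fun u => ω u = 1) v))
          have hdnn : (0:ℝ) ≤ (G.degree v : ℝ) := Nat.cast_nonneg _
          nlinarith [Real.exp_pos (-(d^2) * ((G.degree v : ℕ) : ℝ) ^ ε)]
      calc ∑ v : V, _ ≤ ∑ v : V, 2 * (ε^2/10^5) := Finset.sum_le_sum fun v _ => hbound v
        _ = (n:ℝ) * (2 * (ε^2/10^5)) := by
            rw [Finset.sum_const, Finset.card_univ, nsmul_eq_mul, hndef]
    calc (∑ ω : V → Fin 3, Wt w ω * Y ω) / aY ≤ ((n:ℝ) * (2 * (ε^2/10^5))) / aY := by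
          gcongr
      _ = 2/5 := by
          rw [haYdef]
          field_simp
          ring
  -- combine all five events
  have htotal : Pr w (fun ω : V → Fin 3 =>
      (((univ.filter fun u : V => ω u = 0).card : ℝ) ≤ p * n - lam0) ∨
      (p * n + lam0 ≤ ((univ.filter fun u : V => ω u = 0).card : ℝ)) ∨
      (((univ.filter fun u : V => ω u = 1).card : ℝ) ≤ p * n - lam0) ∨
      (p * n + lam0 ≤ ((univ.filter fun u : V => ω u = 1).card : ℝ)) ∨
      (aY ≤ Y ω)) < 1 := by
    refine lt_of_le_of_lt ?_ (by norm_num : (1/8 + (1/8 + (1/8 + (1/8 + 2/5))) : ℝ) < 1)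
    refine le_trans (Pr_or_le hw _ _) ?_
    refine add_le_add hAlow ?_
    refine le_trans (Pr_or_le hw _ _) ?_
    refine add_le_add hAhigh ?_
    refine le_trans (Pr_or_le hw _ _) ?_
    refine add_le_add hBlow ?_
    refine le_trans (Pr_or_le hw _ _) ?_
    exact add_le_add hBhigh hYtail
  obtain ⟨ω, hω⟩ := exists_not_of_Pr_lt_one hw hw1 _ htotal
  push_neg at hω
  obtain ⟨hA1, hA2, hB1, hB2, hY5⟩ := hω
  have hY5' : ∑ v : V, (G.degree v : ℝ) *
      (if ¬(IsGood G c ε d (univ.filter fun u => ω u = 0) v ∧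
        IsGood G c ε d (univ.filter fun u => ω u = 1) v) then (1:ℝ) else 0) < aY := hY5
  set A0 : Finset V := univ.filter (fun u => ω u = 0) with hA0def
  set B0 : Finset V := univ.filter (fun u => ω u = 1) with hB0def
  set C0 : Finset V := univ.filter (fun u => ω u = 2) with hC0def
  set badC : Finset V := C0.filter
    (fun v => ¬(IsGood G c ε d A0 v ∧ IsGood G c ε d B0 v)) with hbadCdef
  have hdisj : ∀ (x y : Fin 3), x ≠ y →
      Disjoint (univ.filter fun u : V => ω u = x) (univ.filter fun u : V => ω u = y) := by
    intro x y hxy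
    rw [Finset.disjoint_left]
    intro u hu1 hu2
    rw [Finset.mem_filter] at hu1 hu2
    exact hxy (hu1.2 ▸ hu2.2 ▸ rfl)
  have hAB : Disjoint A0 B0 := hdisj 0 1 (by decide)
  have hAC : Disjoint A0 C0 := hdisj 0 2 (by decide)
  have hBC : Disjoint B0 C0 := hdisj 1 2 (by decide)
  have hbadsub : badC ⊆ C0 := Finset.filter_subset _ _
  have hA0bad : Disjoint A0 badC := Finset.disjoint_of_subset_right hbadsub hAC
  have hbaddeg : ∀ v ∈ badC, 1 ≤ G.degree v := by
    intro v hv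
    rw [hbadCdef, Finset.mem_filter] at hv
    by_contra hcon
    push_neg at hcon
    have h0 : G.degree v = 0 := by omega
    exact hv.2 ⟨good_of_degree_zero G c ε d A0 v h0, good_of_degree_zero G c ε d B0 v h0⟩
  have hbadCY : ((badC.card : ℕ) : ℝ) ≤ ∑ v : V, (G.degree v : ℝ) *
      (if ¬(IsGood G c ε d A0 v ∧ IsGood G c ε d B0 v) then (1:ℝ) else 0) := by
    have h1 : ((badC.card : ℕ) : ℝ) = ∑ v ∈ badC, (1:ℝ) := by
      rw [Finset.sum_const, nsmul_eq_mul, mul_one]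
    rw [h1]
    have h2 : ∑ v ∈ badC, (1:ℝ) ≤ ∑ v ∈ badC, (G.degree v : ℝ) *
        (if ¬(IsGood G c ε d A0 v ∧ IsGood G c ε d B0 v) then (1:ℝ) else 0) := by
      apply Finset.sum_le_sum
      intro v hv
      have hv' : v ∈ C0.filter (fun v => ¬(IsGood G c ε d A0 v ∧ IsGood G c ε d B0 v)) := by
        rwa [← hbadCdef]
      have hb : ¬(IsGood G c ε d A0 v ∧ IsGood G c ε d B0 v) :=
        (Finset.mem_filter.1 hv').2
      rw [if_pos hb, mul_one]
      exact_mod_cast hbaddeg v hv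
    refine h2.trans ?_
    apply Finset.sum_le_sum_of_subset_of_nonneg (Finset.subset_univ _)
    intro v _ _
    positivity
  have hYexp : ∑ v : V, (G.degree v : ℝ) *
      (if ¬(IsGood G c ε d A0 v ∧ IsGood G c ε d B0 v) then (1:ℝ) else 0) < aY := hY5'
  have hA1' : ((1-c)/2 - ε) * (n:ℝ) - ε*(n:ℝ)/25 < ((A0.card : ℕ):ℝ) := by
    rw [hpdef, hlam0def] at hA1; exact hA1
  have hA2' : ((A0.card : ℕ):ℝ) < ((1-c)/2 - ε) * (n:ℝ) + ε*(n:ℝ)/25 := by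
    rw [hpdef, hlam0def] at hA2; exact hA2
  have hB1' : ((1-c)/2 - ε) * (n:ℝ) - ε*(n:ℝ)/25 < ((B0.card : ℕ):ℝ) := by
    rw [hpdef, hlam0def] at hB1; exact hB1
  have hB2' : ((B0.card : ℕ):ℝ) < ((1-c)/2 - ε) * (n:ℝ) + ε*(n:ℝ)/25 := by
    rw [hpdef, hlam0def] at hB2; exact hB2
  have hsq : ε^2 * (n:ℝ) ≤ (1/4) * (ε * (n:ℝ)) := by
    nlinarith [mul_le_mul_of_nonneg_right hε4 hεn]
  clear hY5 hYtail hYnonneg hAlow hAhigh hBlow hBhigh htotal hexp8 hA1 hA2 hB1 hB2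
  refine ⟨A0 ∪ badC, B0, C0 \ badC, ?_, ?_, ?_, ?_, ?_, ?_, ?_, ?_, ?_, ?_⟩
  · exact Finset.disjoint_union_left.2 ⟨hAB, Finset.disjoint_of_subset_left hbadsub hBC.symm⟩
  · refine Finset.disjoint_union_left.2 ⟨?_, ?_⟩
    · exact Finset.disjoint_of_subset_right (Finset.sdiff_subset) hAC
    · exact Finset.disjoint_sdiff
  · exact Finset.disjoint_of_subset_right (Finset.sdiff_subset) hBC
  · apply Finset.eq_univ_of_forall
    intro a
    have h3 : ∀ k : Fin 3, k = 0 ∨ k = 1 ∨ k = 2 := by decide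
    rcases h3 (ω a) with h | h | h
    · exact Finset.mem_union_left _ (Finset.mem_union_left _
        (Finset.mem_union_left _ (Finset.mem_filter.2 ⟨Finset.mem_univ _, h⟩)))
    · exact Finset.mem_union_left _
        (Finset.mem_union_right _ (Finset.mem_filter.2 ⟨Finset.mem_univ _, h⟩))
    · by_cases hb : a ∈ badC
      · exact Finset.mem_union_left _ (Finset.mem_union_left _ (Finset.mem_union_right _ hb))
      · exact Finset.mem_union_right _ (Finset.mem_sdiff.2
          ⟨Finset.mem_filter.2 ⟨Finset.mem_univ _, h⟩, hb⟩)
  · -- lower bound on |A|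
    have hle : (A0.card : ℝ) ≤ ((A0 ∪ badC).card : ℝ) := by
      exact_mod_cast Finset.card_le_card Finset.subset_union_left
    linarith [hA1', hεn]
  · -- upper bound on |A|
    have hcardA : (((A0 ∪ badC).card : ℕ) : ℝ) = ((A0.card : ℕ) : ℝ) + ((badC.card : ℕ) : ℝ) := by
      rw [← Nat.cast_add]
      congr 1
      exact Finset.card_union_of_disjoint hA0bad
    rw [hcardA]
    have hbadlt : ((badC.card : ℕ) : ℝ) < aY := lt_of_le_of_lt hbadCY hYexp
    rw [haYdef] at hbadlt
    linarith [hA2', hεn, hsq]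
  · -- lower bound on |B|
    linarith [hB1', hεn]
  · -- upper bound on |B|
    linarith [hB2', hεn]
  · -- goodness on C'
    intro v hv
    rw [Finset.mem_sdiff] at hv
    obtain ⟨hvC, hvnb⟩ := hv
    have hgood : IsGood G c ε d A0 v ∧ IsGood G c ε d B0 v := by
      by_contra hcon
      apply hvnb
      rw [hbadCdef]
      exact Finset.mem_filter.2 ⟨hvC, hcon⟩
    exact ⟨isGood_mono G c ε d Finset.subset_union_left v hgood.1, hgood.2⟩
  · -- the tsum bound
    have hgrp := tsum_group G (fun v => ¬(IsGood G c ε d (A0 ∪ badC) v ∧ IsGood G c ε d B0 v))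
    rw [show (∑' i : ℕ, (i : ℝ) * ((Finset.univ.filter (fun v : V =>
        G.degree v = i ∧ ¬(IsGood G c ε d (A0 ∪ badC) v ∧ IsGood G c ε d B0 v))).card : ℝ))
      = ∑ v : V, (G.degree v : ℝ) *
        (if ¬(IsGood G c ε d (A0 ∪ badC) v ∧ IsGood G c ε d B0 v) then (1:ℝ) else 0)
      from by
        convert hgrp using 4
        norm_cast
        congr 1
        ext v
        simp [Finset.mem_filter]]
    have hmono : ∑ v : V, (G.degree v : ℝ) *
        (if ¬(IsGood G c ε d (A0 ∪ badC) v ∧ IsGood G c ε d B0 v) then (1:ℝ) else 0)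
        ≤ ∑ v : V, (G.degree v : ℝ) *
        (if ¬(IsGood G c ε d A0 v ∧ IsGood G c ε d B0 v) then (1:ℝ) else 0) := by
      apply Finset.sum_le_sum
      intro v _
      by_cases hb : ¬(IsGood G c ε d (A0 ∪ badC) v ∧ IsGood G c ε d B0 v)
      · have hb0 : ¬(IsGood G c ε d A0 v ∧ IsGood G c ε d B0 v) := by
          intro hcon
          exact hb ⟨isGood_mono G c ε d Finset.subset_union_left v hcon.1, hcon.2⟩
        rw [if_pos hb, if_pos hb0]
      · rw [if_neg hb, mul_zero]
        positivity
    have haYle : aY ≤ ε ^ 2 * (n : ℝ) / 10 ^ 4 := by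
      rw [haYdef]
      have : (0:ℝ) ≤ ε^2 * n := by positivity
      linarith
    linarith [lt_of_le_of_lt hmono hYexp]
end

section
/- Let r ≥ 2 be an integer and let α₁, …, α_r ∈ (0,1) be reals with ∑_{i=1}^r α_i = 1. Every finite simple graph G admits a partition V(G) = U₁ ∪ U₂ ∪ … ∪ U_r (parts possibly empty) such that for all indices i ≠ j and every vertex x ∈ U_i, one has d_{U_i}(x)/α_i ≤ d_{U_j}(x)/α_j. In particular, every x ∈ U_i satisfies d_{U_i}(x) ≤ α_i·d_G(x) and d_{V(G) \ U_i}(x) ≥ (1 − α_i)·d_G(x). -/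
/-- Lemma A.1, biased Max-`r`-Cut. -/
theorem biased_max_r_cut (r : ℕ) (hr : 2 ≤ r)
    (α : Fin r → ℝ) (hα : ∀ i, 0 < α i ∧ α i < 1) (hsum : ∑ i, α i = 1)
    (V : Type) [Fintype V] [DecidableEq V]
    (G : SimpleGraph V) [DecidableRel G.Adj] :
    ∃ U : Fin r → Finset V,
      (∀ i j, i ≠ j → Disjoint (U i) (U j)) ∧
      Finset.univ.biUnion U = Finset.univ ∧
      (∀ i j, i ≠ j → ∀ x ∈ U i,
        (((U i).filter (G.Adj x)).card : ℝ) / α i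
          ≤ (((U j).filter (G.Adj x)).card : ℝ) / α j) ∧
      (∀ i, ∀ x ∈ U i,
        (((U i).filter (G.Adj x)).card : ℝ) ≤ α i * (G.degree x : ℝ) ∧
        (1 - α i) * (G.degree x : ℝ)
          ≤ (((Finset.univ \ U i).filter (G.Adj x)).card : ℝ)) := by
  classical
  -- pair weight
  set t : (V → Fin r) → V → V → ℝ :=
    fun f y z => if G.Adj y z ∧ f y = f z then (α (f y))⁻¹ else 0 with ht
  set Φ : (V → Fin r) → ℝ := fun f => ∑ y, ∑ z, t f y z with hΦ
  have hne : (Finset.univ : Finset (V → Fin r)).Nonempty :=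
    ⟨fun _ => ⟨0, by omega⟩, Finset.mem_univ _⟩
  obtain ⟨f, -, hmin⟩ := Finset.exists_min_image Finset.univ Φ hne
  -- D k : number of neighbors of x in part k
  set D : V → Fin r → ℕ :=
    fun x k => (Finset.univ.filter fun z => G.Adj x z ∧ f z = k).card with hD
  have tsymm : ∀ (g : V → Fin r) y z, t g y z = t g z y := by
    intro g y z
    simp only [ht]
    by_cases h : G.Adj y z ∧ g y = g z
    · rw [if_pos h, if_pos ⟨h.1.symm, h.2.symm⟩, h.2]
    · rw [if_neg h, if_neg (fun h' => h ⟨h'.1.symm, h'.2.symm⟩)]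
  -- key local optimality inequality
  have key : ∀ x : V, ∀ j : Fin r, j ≠ f x →
      ((D x (f x) : ℝ)) / α (f x) ≤ (D x j : ℝ) / α j := by
    intro x j hj
    set f' := Function.update f x j with hf'
    have hmin' : Φ f ≤ Φ f' := hmin f' (Finset.mem_univ _)
    have hAdjxx : ¬ G.Adj x x := G.irrefl
    have hsum1 : ∀ z, t f x z = if G.Adj x z ∧ f z = f x then (α (f x))⁻¹ else 0 := by
      intro z
      simp only [ht]
      by_cases h : G.Adj x z ∧ f z = f x
      · rw [if_pos ⟨h.1, h.2.symm⟩, if_pos h]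
      · rw [if_neg (fun h' => h ⟨h'.1, h'.2.symm⟩), if_neg h]
    have hsum2 : ∀ z, t f' x z = if G.Adj x z ∧ f z = j then (α j)⁻¹ else 0 := by
      intro z
      by_cases hzx : z = x
      · subst hzx
        rw [if_neg (fun h => hAdjxx h.1)]
        simp only [ht]
        rw [if_neg (fun h => hAdjxx h.1)]
      · simp only [ht, hf', Function.update_self, Function.update_of_ne hzx]
        by_cases h : G.Adj x z ∧ f z = j
        · rw [if_pos ⟨h.1, h.2.symm⟩, if_pos h]
        · rw [if_neg (fun h' => h ⟨h'.1, h'.2.symm⟩), if_neg h]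
    have hzero : ∀ y z, y ≠ x → z ≠ x → t f' y z = t f y z := by
      intro y z hy hz
      simp only [ht, hf', Function.update_of_ne hy, Function.update_of_ne hz]
    -- the central sum over z at x
    have hSx1 : ∑ z, t f x z = (D x (f x) : ℝ) * (α (f x))⁻¹ := by
      simp only [hsum1]
      rw [← Finset.sum_filter, Finset.sum_const, nsmul_eq_mul, hD]
    have hSx2 : ∑ z, t f' x z = (D x j : ℝ) * (α j)⁻¹ := by
      simp only [hsum2]
      rw [← Finset.sum_filter, Finset.sum_const, nsmul_eq_mul, hD]
    have hdiff : Φ f' - Φ f = 2 * ((D x j : ℝ) * (α j)⁻¹ - (D x (f x) : ℝ) * (α (f x))⁻¹) := by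
      have h1 : Φ f' - Φ f = ∑ y, ∑ z, (t f' y z - t f y z) := by
        simp only [hΦ, ← Finset.sum_sub_distrib]
      have hinner : ∀ y, y ≠ x → ∑ z, (t f' y z - t f y z) = t f' y x - t f y x := by
        intro y hy
        rw [← Finset.add_sum_erase _ _ (Finset.mem_univ x)]
        have : ∑ z ∈ Finset.univ.erase x, (t f' y z - t f y z) = 0 := by
          apply Finset.sum_eq_zero
          intro z hz
          rw [hzero y z hy (Finset.ne_of_mem_erase hz), sub_self]
        rw [this, add_zero]
      have hδxx : t f' x x - t f x x = 0 := by
        simp only [ht]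
        rw [if_neg (fun h => (G.irrefl) h.1), if_neg (fun h => (G.irrefl) h.1), sub_self]
      rw [h1, ← Finset.add_sum_erase _ _ (Finset.mem_univ x)]
      have h2 : ∑ y ∈ Finset.univ.erase x, ∑ z, (t f' y z - t f y z)
          = ∑ y ∈ Finset.univ.erase x, (t f' x y - t f x y) := by
        apply Finset.sum_congr rfl
        intro y hy
        rw [hinner y (Finset.ne_of_mem_erase hy), tsymm, tsymm f]
      rw [h2]
      have h3 : ∑ y ∈ Finset.univ.erase x, (t f' x y - t f x y)
          = ∑ z, (t f' x z - t f x z) := by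
        rw [← Finset.add_sum_erase _ (fun z => t f' x z - t f x z) (Finset.mem_univ x), hδxx,
          zero_add]
      rw [h3, Finset.sum_sub_distrib, hSx1, hSx2]
      ring
    have hpos : 0 ≤ Φ f' - Φ f := by linarith
    rw [hdiff] at hpos
    rw [div_eq_mul_inv, div_eq_mul_inv]
    linarith
  refine ⟨fun i => Finset.univ.filter (fun v => f v = i), ?_, ?_, ?_, ?_⟩
  · intro i j hij
    rw [Finset.disjoint_left]
    intro a ha hb
    simp only [Finset.mem_filter] at ha hb
    exact hij (ha.2 ▸ hb.2 ▸ rfl)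
  · apply Finset.eq_univ_of_forall
    intro v
    exact Finset.mem_biUnion.2
      ⟨f v, Finset.mem_univ _, Finset.mem_filter.2 ⟨Finset.mem_univ _, rfl⟩⟩
  · intro i j hij x hx
    simp only [Finset.mem_filter, Finset.mem_univ, true_and] at hx
    have hU : ∀ k, (Finset.univ.filter (fun v => f v = k)).filter (G.Adj x)
        = Finset.univ.filter (fun z => G.Adj x z ∧ f z = k) := by
      intro k
      rw [Finset.filter_filter]
      apply Finset.filter_congr
      intro z _
      exact and_comm
    rw [hU i, hU j]
    have := key x j (fun h => hij (hx ▸ h.symm))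
    rw [hx] at this
    exact this
  · intro i x hx
    simp only [Finset.mem_filter, Finset.mem_univ, true_and] at hx
    have hU : ∀ k, (Finset.univ.filter (fun v => f v = k)).filter (G.Adj x)
        = Finset.univ.filter (fun z => G.Adj x z ∧ f z = k) := by
      intro k
      rw [Finset.filter_filter]
      apply Finset.filter_congr
      intro z _
      exact and_comm
    have hdeg : ∑ k, (D x k : ℝ) = (G.degree x : ℝ) := by
      have hdegnat : G.degree x = (Finset.univ.filter (G.Adj x)).card := by
        rw [SimpleGraph.degree]
        congr 1
        ext z
        simp [SimpleGraph.mem_neighborFinset]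
      have := Finset.card_eq_sum_card_fiberwise
        (f := f) (s := Finset.univ.filter (G.Adj x)) (t := Finset.univ)
        (fun y _ => Finset.mem_univ _)
      have heq : ∀ k, ((Finset.univ.filter (G.Adj x)).filter fun z => f z = k)
          = Finset.univ.filter (fun z => G.Adj x z ∧ f z = k) := by
        intro k; rw [Finset.filter_filter]
      rw [hdegnat, this]
      push_cast
      apply Finset.sum_congr rfl
      intro k _
      rw [hD, heq k]
    have hαi := hα i
    -- sum the key inequality over j ≠ i
    have hstep : ∀ j ∈ Finset.univ.erase i, α j * ((D x i : ℝ) / α i) ≤ (D x j : ℝ) := by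
      intro j hj
      have hji : j ≠ i := Finset.ne_of_mem_erase hj
      have hk := key x j (fun h => hji (h.trans hx))
      rw [hx] at hk
      have hαj := (hα j).1
      calc α j * ((D x i : ℝ) / α i) ≤ α j * ((D x j : ℝ) / α j) := by
            apply mul_le_mul_of_nonneg_left hk (le_of_lt hαj)
        _ = (D x j : ℝ) := by field_simp
    have hsumerase : ∑ j ∈ Finset.univ.erase i, α j = 1 - α i := by
      have := Finset.add_sum_erase Finset.univ α (Finset.mem_univ i)
      rw [hsum] at this
      linarith
    have hsumD : ∑ j ∈ Finset.univ.erase i, (D x j : ℝ) = (G.degree x : ℝ) - (D x i : ℝ) := by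
      have := Finset.add_sum_erase Finset.univ (fun k => (D x k : ℝ)) (Finset.mem_univ i)
      rw [hdeg] at this
      linarith
    have hmain : (1 - α i) * ((D x i : ℝ) / α i) ≤ (G.degree x : ℝ) - (D x i : ℝ) := by
      calc (1 - α i) * ((D x i : ℝ) / α i)
          = ∑ j ∈ Finset.univ.erase i, α j * ((D x i : ℝ) / α i) := by
            rw [← Finset.sum_mul, hsumerase]
        _ ≤ ∑ j ∈ Finset.univ.erase i, (D x j : ℝ) := Finset.sum_le_sum hstep
        _ = (G.degree x : ℝ) - (D x i : ℝ) := hsumD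
    have hαne : α i ≠ 0 := ne_of_gt hαi.1
    have hDi : (D x i : ℝ) ≤ α i * (G.degree x : ℝ) := by
      have h1 : (D x i : ℝ) / α i ≤ (G.degree x : ℝ) := by
        have : (1 - α i) * ((D x i : ℝ) / α i) = (D x i : ℝ) / α i - (D x i : ℝ) := by
          field_simp
        linarith [this ▸ hmain]
      calc (D x i : ℝ) = α i * ((D x i : ℝ) / α i) := by field_simp
        _ ≤ α i * (G.degree x : ℝ) := mul_le_mul_of_nonneg_left h1 (le_of_lt hαi.1)
    constructor
    · rw [hU i]
      exact hDi
    · have hdegnat : G.degree x = (Finset.univ.filter (G.Adj x)).card := by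
        rw [SimpleGraph.degree]
        congr 1
        ext z
        simp [SimpleGraph.mem_neighborFinset]
      have hset : (Finset.univ \ Finset.univ.filter (fun v => f v = i)).filter (G.Adj x)
          = Finset.univ.filter (G.Adj x)
            \ (Finset.univ.filter (fun v => f v = i)).filter (G.Adj x) := by
        ext z
        simp only [Finset.mem_filter, Finset.mem_sdiff, Finset.mem_univ, true_and]
        tauto
      have hsub : (Finset.univ.filter (fun v => f v = i)).filter (G.Adj x)
          ⊆ Finset.univ.filter (G.Adj x) :=
        Finset.filter_subset_filter _ (Finset.filter_subset _ _)
      have hcardUi : ((Finset.univ.filter (fun v => f v = i)).filter (G.Adj x)).card = D x i := by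
        rw [hU i]
      have hle : D x i ≤ (Finset.univ.filter (G.Adj x)).card :=
        hcardUi ▸ Finset.card_le_card hsub
      have hcard : ((Finset.univ \ Finset.univ.filter (fun v => f v = i)).filter (G.Adj x)).card
          = (Finset.univ.filter (G.Adj x)).card - D x i := by
        rw [hset, Finset.card_sdiff_of_subset hsub, hcardUi]
      rw [hcard, Nat.cast_sub hle, ← hdegnat]
      linarith
end

section
/- For every integer ℓ ≥ 2 there exists n₀ such that for all n ≥ n₀ the following holds. Let G be the bipartite graph with parts X = {1, …, n} and Y = { v_F : F is an ℓ-element subset of {1, …, n} }, where i ∈ X is adjacent to v_F ∈ Y if and only if i ∈ F. Then G admits no bisection V(G) = A ∪ B such that every vertex of G has at least one neighbor in its own part and every vertex of A has at least one neighbor in B. -/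
/-- The incidence graph between the elements of `{1, …, n}` (modeled as `Fin n`) and the
`ℓ`-element subsets of `{1, …, n}`: `i` is adjacent to `v_F` iff `i ∈ F`. -/
def incGraph (n ℓ : ℕ) :
    SimpleGraph (Fin n ⊕ {F : Finset (Fin n) // F.card = ℓ}) :=
  SimpleGraph.fromRel (fun x y =>
    ∃ (i : Fin n) (F : {F : Finset (Fin n) // F.card = ℓ}),
      x = Sum.inl i ∧ y = Sum.inr F ∧ i ∈ F.val)

lemma incGraph_adj_inr {n ℓ : ℕ} {F : {F : Finset (Fin n) // F.card = ℓ}}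
    {u : Fin n ⊕ {F : Finset (Fin n) // F.card = ℓ}}
    (h : (incGraph n ℓ).Adj (Sum.inr F) u) : ∃ i ∈ F.val, u = Sum.inl i := by
  rw [incGraph, SimpleGraph.fromRel_adj] at h
  obtain ⟨hne, h | h⟩ := h
  · obtain ⟨i, G, hi, -⟩ := h; exact absurd hi (by simp)
  · obtain ⟨i, G, hu, hF, hiG⟩ := h
    refine ⟨i, ?_, hu⟩
    obtain rfl : F = G := Sum.inr_injective hF
    exact hiG

/-- number of `ℓ`-subsets of `Fin n` containing a fixed `i` is at most `C(n-1, ℓ-1)` -/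
lemma card_filter_mem_le (n ℓ : ℕ) (hℓ : 1 ≤ ℓ) (i : Fin n) :
    ((Finset.univ.powersetCard ℓ).filter (fun F : Finset (Fin n) => i ∈ F)).card
      ≤ (n - 1).choose (ℓ - 1) := by
  classical
  have hinj : Set.InjOn (fun F : Finset (Fin n) => F.erase i)
      ((Finset.univ.powersetCard ℓ).filter (fun F => i ∈ F)) := by
    intro F hF G hG h
    simp only [Finset.coe_filter, Set.mem_setOf_eq] at hF hG
    have := congrArg (insert i) h
    simpa [Finset.insert_erase hF.2, Finset.insert_erase hG.2] using this
  have hmaps : ∀ F ∈ (Finset.univ.powersetCard ℓ).filter (fun F : Finset (Fin n) => i ∈ F),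
      F.erase i ∈ (Finset.univ.erase i).powersetCard (ℓ - 1) := by
    intro F hF
    simp only [Finset.mem_filter, Finset.mem_powersetCard] at hF ⊢
    refine ⟨fun x hx => ?_, ?_⟩
    · simp only [Finset.mem_erase] at hx ⊢
      exact ⟨hx.1, Finset.mem_univ _⟩
    · rw [Finset.card_erase_of_mem hF.2, hF.1.2]
  calc ((Finset.univ.powersetCard ℓ).filter (fun F : Finset (Fin n) => i ∈ F)).card
      ≤ ((Finset.univ.erase i).powersetCard (ℓ - 1)).card :=
        Finset.card_le_card_of_injOn _ hmaps hinj
    _ = (n - 1).choose (ℓ - 1) := by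
        rw [Finset.card_powersetCard, Finset.card_erase_of_mem (Finset.mem_univ i),
          Finset.card_univ, Fintype.card_fin]

/-- the K"uhn–Osthus example: for every `ℓ ≥ 2` and all sufficiently
large `n`, the incidence graph has no bisection `A ∪ B` in which every vertex has a
neighbor in its own part and every vertex of `A` has a neighbor in `B`. -/
theorem incGraph_no_good_bisection (ℓ : ℕ) (hℓ : 2 ≤ ℓ) :
    ∃ n₀ : ℕ, ∀ n : ℕ, n₀ ≤ n →
      ¬ ∃ A B : Finset (Fin n ⊕ {F : Finset (Fin n) // F.card = ℓ}),
        Disjoint A B ∧ A ∪ B = Finset.univ ∧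
        |(A.card : ℤ) - (B.card : ℤ)| ≤ 1 ∧
        (∀ v ∈ A, ∃ u ∈ A, (incGraph n ℓ).Adj v u) ∧
        (∀ v ∈ B, ∃ u ∈ B, (incGraph n ℓ).Adj v u) ∧
        (∀ v ∈ A, ∃ u ∈ B, (incGraph n ℓ).Adj v u) := by
  classical
  refine ⟨2 * ℓ * ℓ, fun n hn => ?_⟩
  rintro ⟨A, B, hdisj, hunion, hbal, hAA, hBB, hAB⟩
  have hℓn : ℓ ≤ n := by nlinarith
  -- the set of X-vertices in A
  set XA : Finset (Fin n) := Finset.univ.filter (fun i => Sum.inl i ∈ A) with hXAdef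
  -- every ℓ-subset of XA would give a contradiction, so |XA| < ℓ
  have hXAcard : XA.card < ℓ := by
    by_contra h
    push_neg at h
    obtain ⟨F, hFsub, hFcard⟩ := Finset.exists_subset_card_eq h
    set v : Fin n ⊕ {F : Finset (Fin n) // F.card = ℓ} := Sum.inr ⟨F, hFcard⟩ with hv
    have hvmem : v ∈ A ∪ B := hunion ▸ Finset.mem_univ v
    obtain ⟨u, huB, hadj⟩ : ∃ u ∈ B, (incGraph n ℓ).Adj v u := by
      rcases Finset.mem_union.mp hvmem with h' | h'
      · exact hAB v h'
      · exact hBB v h'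
    obtain ⟨i, hiF, rfl⟩ := incGraph_adj_inr hadj
    have hiA : Sum.inl i ∈ A := (Finset.mem_filter.mp (hFsub hiF)).2
    exact Finset.disjoint_left.mp hdisj hiA huB
  -- every vertex of A is either `inl i` with `i ∈ XA`, or `inr F` with `F ∩ XA ≠ ∅`
  have hAsub : A ⊆ XA.image Sum.inl ∪
      (Finset.univ.filter (fun F : {F : Finset (Fin n) // F.card = ℓ} =>
        (F.val ∩ XA).Nonempty)).image Sum.inr := by
    intro v hv
    rcases v with i | F
    · refine Finset.mem_union_left _ (Finset.mem_image.mpr ⟨i, ?_, rfl⟩)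
      simp only [hXAdef, Finset.mem_filter]
      exact ⟨Finset.mem_univ _, hv⟩
    · obtain ⟨u, huA, hadj⟩ := hAA _ hv
      obtain ⟨i, hiF, rfl⟩ := incGraph_adj_inr hadj
      refine Finset.mem_union_right _ (Finset.mem_image.mpr ⟨F, ?_, rfl⟩)
      simp only [Finset.mem_filter, Finset.mem_univ, true_and]
      refine ⟨i, Finset.mem_inter.mpr ⟨hiF, ?_⟩⟩
      simp only [hXAdef, Finset.mem_filter]
      exact ⟨Finset.mem_univ _, huA⟩
  -- bound the number of F meeting XA
  have hmeet : (Finset.univ.filter (fun F : {F : Finset (Fin n) // F.card = ℓ} =>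
      (F.val ∩ XA).Nonempty)).card ≤ XA.card * (n - 1).choose (ℓ - 1) := by
    have h1 : ((Finset.univ.filter (fun F : {F : Finset (Fin n) // F.card = ℓ} =>
        (F.val ∩ XA).Nonempty)).image Subtype.val).card
        ≤ (XA.biUnion (fun i => (Finset.univ.powersetCard ℓ).filter
            (fun F : Finset (Fin n) => i ∈ F))).card := by
      apply Finset.card_le_card
      intro F hF
      simp only [Finset.mem_image, Finset.mem_filter, Finset.mem_univ, true_and] at hF
      obtain ⟨G, hG, rfl⟩ := hF
      obtain ⟨i, hi⟩ := hG
      rw [Finset.mem_inter] at hi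
      refine Finset.mem_biUnion.mpr ⟨i, hi.2, ?_⟩
      simp only [Finset.mem_filter, Finset.mem_powersetCard]
      exact ⟨⟨Finset.subset_univ _, G.2⟩, hi.1⟩
    rw [Finset.card_image_of_injective _ Subtype.val_injective] at h1
    refine h1.trans ?_
    refine (Finset.card_biUnion_le).trans ?_
    calc (XA.sum fun i => ((Finset.univ.powersetCard ℓ).filter
          (fun F : Finset (Fin n) => i ∈ F)).card)
        ≤ XA.sum (fun _ => (n - 1).choose (ℓ - 1)) :=
          Finset.sum_le_sum (fun i _ => card_filter_mem_le n ℓ (by omega) i)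
      _ = XA.card * (n - 1).choose (ℓ - 1) := by rw [Finset.sum_const, smul_eq_mul]
  -- bound |A|
  set c : ℕ := (n - 1).choose (ℓ - 1) with hc
  have hAcard : A.card ≤ (ℓ - 1) + (ℓ - 1) * c := by
    set S1 : Finset (Fin n ⊕ {F : Finset (Fin n) // F.card = ℓ}) := XA.image Sum.inl with hS1
    set S2 : Finset (Fin n ⊕ {F : Finset (Fin n) // F.card = ℓ}) :=
      (Finset.univ.filter (fun F : {F : Finset (Fin n) // F.card = ℓ} =>
        (F.val ∩ XA).Nonempty)).image Sum.inr with hS2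
    have h1 : A.card ≤ (S1 ∪ S2).card := Finset.card_le_card hAsub
    have h2 : (S1 ∪ S2).card ≤ S1.card + S2.card := Finset.card_union_le S1 S2
    have h3 : S1.card = XA.card := by
      rw [hS1]; exact Finset.card_image_of_injective XA Sum.inl_injective
    have h4 : S2.card ≤ XA.card * c := by
      rw [hS2, Finset.card_image_of_injective _ Sum.inr_injective]; exact hmeet
    have h5 : XA.card ≤ ℓ - 1 := by omega
    have h6 := Nat.mul_le_mul_right c h5
    omega
  -- total count
  have htot : A.card + B.card = n + n.choose ℓ := by
    have h : (A ∪ B).card = A.card + B.card := Finset.card_union_of_disjoint hdisj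
    rw [hunion, Finset.card_univ] at h
    replace h := h.symm
    simpa [Fintype.card_sum] using h
  -- the key identity ℓ * C(n,ℓ) = n * c
  have hid : ℓ * n.choose ℓ = n * c := by
    obtain ⟨m, rfl⟩ : ∃ m, n = m + 1 := ⟨n - 1, by omega⟩
    obtain ⟨k, rfl⟩ : ∃ k, ℓ = k + 1 := ⟨ℓ - 1, by omega⟩
    have h := Nat.add_one_mul_choose_eq m k
    rw [hc]
    simp only [Nat.add_sub_cancel]
    rw [mul_comm]
    omega
  have hc1 : 1 ≤ c := Nat.choose_pos (by omega)
  -- balance gives 2|A| + 1 ≥ n + C(n,ℓ)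
  have hbal' : (n : ℤ) + n.choose ℓ ≤ 2 * A.card + 1 := by
    have h1 : ((A.card : ℤ) + B.card) = n + n.choose ℓ := by exact_mod_cast htot
    rw [abs_le] at hbal
    linarith [hbal.1]
  -- derive contradiction
  have hA' : (A.card : ℤ) ≤ (ℓ - 1 : ℤ) + (ℓ - 1) * c := by
    have : ((ℓ - 1 : ℕ) : ℤ) = (ℓ : ℤ) - 1 := by
      have : 1 ≤ ℓ := by omega
      push_cast [Nat.cast_sub this]; ring
    calc (A.card : ℤ) ≤ ((ℓ - 1) + (ℓ - 1) * c : ℕ) := by exact_mod_cast hAcard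
      _ = (ℓ - 1 : ℤ) + (ℓ - 1) * c := by push_cast [Nat.cast_sub (by omega : 1 ≤ ℓ)]; ring
  have hid' : (ℓ : ℤ) * n.choose ℓ = n * c := by exact_mod_cast hid
  have hn' : (2 : ℤ) * ℓ * ℓ ≤ n := by exact_mod_cast hn
  have hc1' : (1 : ℤ) ≤ c := by exact_mod_cast hc1
  have hℓ' : (2 : ℤ) ≤ ℓ := by exact_mod_cast hℓ
  nlinarith [mul_le_mul_of_nonneg_left hbal' (by linarith : (0:ℤ) ≤ (ℓ:ℤ)),
    mul_le_mul_of_nonneg_left hA' (by linarith : (0:ℤ) ≤ (ℓ:ℤ)),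
    mul_le_mul_of_nonneg_right hn' (by linarith : (0:ℤ) ≤ (c:ℤ))]
end
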